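/- Let A be a linear relation in a Hilbert space H and let P be the orthogonal projection of H onto the closure of dom A*. Then A = A_reg + A_sing (operatorwise sum), where A_reg = {(f, P f') : (f,f') ∈ A} satisfies mul (A_reg)** = {0} (i.e., A_reg is a closable operator), and A_sing = {(f, (I−P) f') : (f,f') ∈ A} is singular, i.e., ran A_sing ⊆ mul (A_sing)**. Moreover mul A_sing = mul A. -/

import Mathlib

/-!
Every `m ∈ mul A` is orthogonal to `dom A*`, so `P` kills `mul A`; this makes the splitting
`(f, f') ↦ (f, P f') + (f, f' - P f')` reversible and leaves `mul A_sing = mul A`.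
Both `A*` and the pairs `(x - P x, 0)` lie in `A_reg*`, so `dom A_reg*` is dense and
`mul A_reg** = (dom A_reg*)^⊥ = {0}`. Conversely, `(u, v) ∈ A_sing*` forces `(u - P u, v) ∈ A*`,
so `dom A_sing*` lies in `ran P` and is orthogonal to `ran (I - P) ⊇ ran A_sing`.
-/

open scoped ComplexInnerProductSpace

variable {H : Type*} [NormedAddCommGroup H] [InnerProductSpace ℂ H] [CompleteSpace H]

/-- The adjoint of a linear relation (given as a set of pairs). -/
def adjRel (S : Set (H × H)) : Set (H × H) :=
  {p | ∀ q ∈ S, ⟪p.2, q.1⟫ = ⟪p.1, q.2⟫}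

/-- The domain of a linear relation. -/
def domRel (S : Set (H × H)) : Set H := {f | ∃ g, (f, g) ∈ S}

/-- The range of a linear relation. -/
def ranRel (S : Set (H × H)) : Set H := {g | ∃ f, (f, g) ∈ S}

/-- The multivalued part of a linear relation. -/
def mulRel (S : Set (H × H)) : Set H := {g | (0, g) ∈ S}

/-- The kernel of a linear relation. -/
def kerRel (S : Set (H × H)) : Set H := {f | (f, 0) ∈ S}

/-- The operatorwise sum of two linear relations. -/
def opSum (S T : Set (H × H)) : Set (H × H) :=
  {p | ∃ g h, (p.1, g) ∈ S ∧ (p.1, h) ∈ T ∧ p.2 = g + h}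

/-- The product (composition) S ∘ T of two linear relations: apply T first, then S. -/
def relComp (S T : Set (H × H)) : Set (H × H) :=
  {p | ∃ h, (p.1, h) ∈ T ∧ (h, p.2) ∈ S}

/-- The numerical range of a linear relation. -/
def numRange (S : Set (H × H)) : Set ℂ :=
  {z | ∃ p ∈ S, ‖p.1‖ = 1 ∧ z = ⟪p.2, p.1⟫}


variable {E : Type*} [NormedAddCommGroup E]

/-- `A_reg = compSnd P A` and `A_sing = compSnd (1 - P) A`. -/
def compSnd (T : E → E) (S : Set (E × E)) : Set (E × E) :=
  {p | ∃ q ∈ S, p = (q.1, T q.2)}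

lemma mulRel_compSnd (T : E → E) (S : Set (E × E)) :
    mulRel (compSnd T S) = T '' mulRel S := by
  ext g
  constructor
  · rintro ⟨⟨f, f'⟩, hq, hp⟩
    simp only [Prod.mk.injEq] at hp
    obtain ⟨rfl, rfl⟩ := hp
    exact ⟨f', hq, rfl⟩
  · rintro ⟨m, hm, rfl⟩
    exact ⟨(0, m), hm, rfl⟩

variable [InnerProductSpace ℂ E]

structure IsOrthProj (P : E →ₗ[ℂ] E) (D : Set E) : Prop where
  mem : ∀ x, P x ∈ D
  inner_sub_eq_zero : ∀ x, ∀ y ∈ D, ⟪x - P x, y⟫ = 0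

namespace IsOrthProj

variable {P : E →ₗ[ℂ] E} {D : Set E}

lemma inner_apply_right (hP : IsOrthProj P D) {u : E} (hu : u ∈ D) (x : E) :
    ⟪u, P x⟫ = ⟪u, x⟫ := by
  have h := inner_eq_zero_symm.mp (hP.inner_sub_eq_zero x u hu)
  rw [inner_sub_right, sub_eq_zero] at h
  exact h.symm

lemma apply_eq_zero (hP : IsOrthProj P D) {x : E} (hx : ∀ u ∈ D, ⟪x, u⟫ = 0) : P x = 0 := by
  have h := hP.inner_sub_eq_zero x (P x) (hP.mem x)
  rwa [inner_sub_left, hx _ (hP.mem x), zero_sub, neg_eq_zero, inner_self_eq_zero] at h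

lemma sub_apply_eq_zero (hP : IsOrthProj P D) {x : E} (hx : x - P x ∈ D) : x - P x = 0 :=
  inner_self_eq_zero.mp (hP.inner_sub_eq_zero x _ hx)

lemma inner_sub_apply_comm (hP : IsOrthProj P D) (x y : E) :
    ⟪x - P x, y⟫ = ⟪x, y - P y⟫ := by
  have hx := hP.inner_sub_eq_zero x (P y) (hP.mem y)
  have hy := inner_eq_zero_symm.mp (hP.inner_sub_eq_zero y (P x) (hP.mem x))
  rw [inner_sub_left] at hx
  rw [inner_sub_right] at hy
  rw [inner_sub_left, inner_sub_right]
  linear_combination hx - hy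

end IsOrthProj

lemma inner_eq_zero_of_mem_closure {g : E} {s : Set E} (h : ∀ u ∈ s, ⟪g, u⟫ = 0) {u : E}
    (hu : u ∈ closure s) : ⟪g, u⟫ = 0 :=
  closure_minimal h (isClosed_eq (continuous_const.inner continuous_id) continuous_const) hu

lemma subset_adjRel_adjRel (S : Set (E × E)) : S ⊆ adjRel (adjRel S) :=
  fun p hp q hq => by rw [← inner_conj_symm, ← hq p hp, inner_conj_symm]

lemma mem_mulRel_adjRel_iff {T : Set (E × E)} {g : E} :
    g ∈ mulRel (adjRel T) ↔ ∀ u ∈ domRel T, ⟪g, u⟫ = 0 := by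
  refine ⟨fun h u ⟨v, huv⟩ => by simpa using h (u, v) huv,
    fun h q hq => by simpa using h q.1 ⟨q.2, hq⟩⟩

lemma inner_eq_zero_of_mem_mulRel {S : Set (E × E)} {m u : E} (hm : m ∈ mulRel S)
    (hu : u ∈ closure (domRel (adjRel S))) : ⟪m, u⟫ = 0 :=
  inner_eq_zero_of_mem_closure (mem_mulRel_adjRel_iff.mp (subset_adjRel_adjRel S hm)) hu

lemma eq_opSum_compSnd (S : Submodule ℂ (E × E)) {T : E →ₗ[ℂ] E} {U : E → E}
    (hTU : ∀ x, T x + U x = x) (hT : ∀ m ∈ mulRel (S : Set (E × E)), T m = 0) :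
    (S : Set (E × E)) = opSum (compSnd T S) (compSnd U S) := by
  ext ⟨f, f'⟩
  constructor
  · intro hp
    exact ⟨T f', U f', ⟨_, hp, rfl⟩, ⟨_, hp, rfl⟩, (hTU f').symm⟩
  · rintro ⟨g, h, ⟨⟨f₁, g₁⟩, hq, hg⟩, ⟨⟨f₂, g₂⟩, hr, hh⟩, hsum⟩
    simp only [Prod.mk.injEq] at hg hh hsum
    obtain ⟨rfl, rfl⟩ := hg
    obtain ⟨rfl, rfl⟩ := hh
    have hdiff : g₁ - g₂ ∈ mulRel (S : Set (E × E)) := by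
      simpa [mulRel] using S.sub_mem hq hr
    have hTeq : T g₁ = T g₂ := sub_eq_zero.mp (by rw [← map_sub]; exact hT _ hdiff)
    rwa [hsum, hTeq, hTU]

section CanonicalDecomposition

variable {S : Set (E × E)} {P : E →ₗ[ℂ] E}

lemma IsOrthProj.apply_eq_zero_of_mem_mulRel
    (hP : IsOrthProj P (closure (domRel (adjRel S)))) {m : E} (hm : m ∈ mulRel S) : P m = 0 :=
  hP.apply_eq_zero fun _ hu => inner_eq_zero_of_mem_mulRel hm hu

lemma adjRel_subset_adjRel_compSnd (hP : IsOrthProj P (closure (domRel (adjRel S)))) :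
    adjRel S ⊆ adjRel (compSnd P S) := by
  rintro ⟨u, v⟩ huv _ ⟨q, hq, rfl⟩
  rw [huv q hq, hP.inner_apply_right (subset_closure ⟨v, huv⟩)]

lemma sub_apply_mem_adjRel_compSnd (hP : IsOrthProj P (closure (domRel (adjRel S)))) (x : E) :
    (x - P x, 0) ∈ adjRel (compSnd P S) := by
  rintro _ ⟨q, -, rfl⟩
  rw [inner_zero_left, hP.inner_sub_eq_zero x _ (hP.mem q.2)]

lemma mulRel_adjRel_adjRel_compSnd (hP : IsOrthProj P (closure (domRel (adjRel S)))) :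
    mulRel (adjRel (adjRel (compSnd P S))) = {0} := by
  refine Set.eq_singleton_iff_unique_mem.mpr ⟨fun q _ => by simp, fun g hg => ?_⟩
  have hdom : ∀ u ∈ domRel (adjRel (compSnd P S)), ⟪g, u⟫ = 0 := mem_mulRel_adjRel_iff.mp hg
  have hdomA : ∀ u ∈ domRel (adjRel S), ⟪g, u⟫ = 0 := by
    rintro u ⟨v, huv⟩
    exact hdom u ⟨v, adjRel_subset_adjRel_compSnd hP huv⟩
  have hperp : ⟪g, g - P g⟫ = 0 := hdom (g - P g) ⟨0, sub_apply_mem_adjRel_compSnd hP g⟩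
  rwa [inner_sub_right, inner_eq_zero_of_mem_closure hdomA (hP.mem g), sub_zero,
    inner_self_eq_zero] at hperp

lemma domRel_adjRel_compSnd_sub_subset (hP : IsOrthProj P (closure (domRel (adjRel S)))) :
    domRel (adjRel (compSnd (fun x => x - P x) S)) ⊆ closure (domRel (adjRel S)) := by
  rintro u ⟨v, huv⟩
  have hshift : (u - P u, v) ∈ adjRel S := fun q hq => by
    rw [huv _ ⟨q, hq, rfl⟩, hP.inner_sub_apply_comm]
  have hu := hP.sub_apply_eq_zero (subset_closure ⟨v, hshift⟩)
  rw [sub_eq_zero.mp hu]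
  exact hP.mem u

lemma ranRel_compSnd_sub_subset (hP : IsOrthProj P (closure (domRel (adjRel S)))) :
    ranRel (compSnd (fun x => x - P x) S) ⊆
      mulRel (adjRel (adjRel (compSnd (fun x => x - P x) S))) := by
  rintro _ ⟨_, q, -, hq⟩
  obtain ⟨-, rfl⟩ := Prod.ext_iff.mp hq
  exact mem_mulRel_adjRel_iff.mpr fun u hu =>
    hP.inner_sub_eq_zero q.2 u (domRel_adjRel_compSnd_sub_subset hP hu)

end CanonicalDecomposition

theorem stmt18_general (A : Submodule ℂ (H × H)) (P : H →ₗ[ℂ] H)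
    (hPmem : ∀ x : H, P x ∈ closure (domRel (adjRel (A : Set (H × H)))))
    (hPorth : ∀ x : H, ∀ y ∈ closure (domRel (adjRel (A : Set (H × H)))),
      ⟪x - P x, y⟫ = 0)
    (Areg Asing : Set (H × H))
    (hreg : Areg = {p | ∃ q ∈ (A : Set (H × H)), p = (q.1, P q.2)})
    (hsing : Asing = {p | ∃ q ∈ (A : Set (H × H)), p = (q.1, q.2 - P q.2)}) :
    (A : Set (H × H)) = opSum Areg Asing ∧
    mulRel (adjRel (adjRel Areg)) = {0} ∧
    ranRel Asing ⊆ mulRel (adjRel (adjRel Asing)) ∧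
    mulRel Asing = mulRel (A : Set (H × H)) := by
  have hP : IsOrthProj P _ := ⟨hPmem, hPorth⟩
  obtain rfl : Areg = compSnd P A := hreg
  obtain rfl : Asing = compSnd (fun x => x - P x) A := hsing
  have hker : ∀ m ∈ mulRel (A : Set (H × H)), P m = 0 := fun _ => hP.apply_eq_zero_of_mem_mulRel
  refine ⟨eq_opSum_compSnd A (fun x => add_sub_cancel (P x) x) hker,
    mulRel_adjRel_adjRel_compSnd hP, ranRel_compSnd_sub_subset hP, ?_⟩
  rw [mulRel_compSnd]
  exact Set.EqOn.image_eq_self fun m hm => by simp [hker m hm]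

/-- Canonical decomposition: A = A_reg + A_sing, A_reg is a closable operator,
A_sing is singular, and mul A_sing = mul A, where P is the orthogonal projection
onto the closure of dom A*. -/
theorem stmt18 (A : Submodule ℂ (H × H)) (P : H →ₗ[ℂ] H)
    (hPmem : ∀ x : H, P x ∈ closure (domRel (adjRel (A : Set (H × H)))))
    (hPfix : ∀ x ∈ closure (domRel (adjRel (A : Set (H × H)))), P x = x)
    (hPorth : ∀ x : H, ∀ y ∈ closure (domRel (adjRel (A : Set (H × H)))),
      ⟪x - P x, y⟫ = 0)
    (Areg Asing : Set (H × H))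
    (hreg : Areg = {p | ∃ q ∈ (A : Set (H × H)), p = (q.1, P q.2)})
    (hsing : Asing = {p | ∃ q ∈ (A : Set (H × H)), p = (q.1, q.2 - P q.2)}) :
    (A : Set (H × H)) = opSum Areg Asing ∧
    mulRel (adjRel (adjRel Areg)) = {0} ∧
    ranRel Asing ⊆ mulRel (adjRel (adjRel Asing)) ∧
    mulRel Asing = mulRel (A : Set (H × H)) :=
  stmt18_general A P hPmem hPorth Areg Asing hreg hsing
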